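/- arXiv:1907.06930 — 4 statements merged into one kernel-verified Lean document; each statement's English description precedes it below -/
import Mathlib

section
/- Suppose every Y_ℓ satisfies Re(Z_ℓ) ≻ 0 with Y_ℓ = Z_ℓ⁻¹ and Z_ℓ symmetric, every Y_t has Re(Y_t) ⪰ 0, the branch graph is weakly connected, and at least one shunt admittance matrix Y_t is invertible with Re(Y_t) ≻ 0. Then the compound admittance matrix Y = (A^P)ᵀ Y_L A^P + Y_T is invertible. -/
/-!
The real part of the quadratic form of `Y = (A^P)ᵀ Y_L A^P + Y_T` at a nodal voltage `x` splits
into the branch terms `Re((A^P x)_ℓ* Y_ℓ (A^P x)_ℓ)` and the shunt terms `Re(x_t* Y_t x_t)`,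
all nonnegative since `Re(Y_ℓ) = Re(Z_ℓ⁻¹) ≻ 0` and `Re(Y_t) ⪰ 0`. If `x ≠ 0`, either
`x_{t₀} ≠ 0` and the shunt term at `t₀` is positive, or `x` vanishes at `t₀` but not everywhere,
so by connectivity some branch carries a nonzero voltage difference and its term is positive.
Hence `Re(Y) ≻ 0`, and `Y` has trivial kernel.
-/

open Matrix Kronecker

/-- Block-diagonal matrix with blocks `f i` indexed by `ι × P`. -/
def blockDiag {ι P : Type*} [DecidableEq ι] (f : ι → Matrix P P ℂ) :
    Matrix (ι × P) (ι × P) ℂ :=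
  fun a b => if a.1 = b.1 then f a.1 a.2 b.2 else 0

/-- `Re M ≻ 0` via the `x* Re`-form on complex vectors. -/
def RePDc {m : Type*} [Fintype m] (M : Matrix m m ℂ) : Prop :=
  ∀ x : m → ℂ, x ≠ 0 → 0 < (star x ⬝ᵥ M.mulVec x).re

/-- `Re M ⪰ 0` via the `x* Re`-form on complex vectors. -/
def RePSDc {m : Type*} [Fintype m] (M : Matrix m m ℂ) : Prop :=
  ∀ x : m → ℂ, 0 ≤ (star x ⬝ᵥ M.mulVec x).re

section QuadraticForm

variable {m n : Type*} [Fintype m] [Fintype n]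

lemma star_dotProduct_conjTranspose_mul_mul_mulVec (M : Matrix m m ℂ) (B : Matrix m n ℂ)
    (x : n → ℂ) : star x ⬝ᵥ (Bᴴ * M * B) *ᵥ x = star (B *ᵥ x) ⬝ᵥ M *ᵥ (B *ᵥ x) := by
  rw [star_mulVec, ← dotProduct_mulVec, mulVec_mulVec, mulVec_mulVec, Matrix.mul_assoc]

lemma RePDc.rePSDc {M : Matrix m m ℂ} (h : RePDc M) : RePSDc M := fun x => by
  rcases eq_or_ne x 0 with rfl | hx
  · simp
  · exact (h x hx).le

lemma RePSDc.conjTranspose_mul_mul {M : Matrix m m ℂ} (h : RePSDc M) (B : Matrix m n ℂ) :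
    RePSDc (Bᴴ * M * B) := fun x => by
  rw [star_dotProduct_conjTranspose_mul_mul_mulVec]
  exact h _

lemma rePDc_add {M M' : Matrix m m ℂ} (hM : RePSDc M) (hM' : RePSDc M')
    (h : ∀ x, x ≠ 0 → 0 < (star x ⬝ᵥ M *ᵥ x).re ∨ 0 < (star x ⬝ᵥ M' *ᵥ x).re) :
    RePDc (M + M') := fun x hx => by
  rw [add_mulVec, dotProduct_add, Complex.add_re]
  rcases h x hx with h | h
  · linarith [hM' x]
  · linarith [hM x]

variable [DecidableEq m]

lemma RePDc.inv {Z : Matrix m m ℂ} (hZ : RePDc Z) (hinv : IsUnit Z) : RePDc Z⁻¹ := by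
  intro x hx
  have hZy : Z *ᵥ (Z⁻¹ *ᵥ x) = x := by
    rw [mulVec_mulVec, mul_nonsing_inv _ ((isUnit_iff_isUnit_det Z).mp hinv), one_mulVec]
  have hy : Z⁻¹ *ᵥ x ≠ 0 := fun h => hx (by rw [← hZy, h, mulVec_zero])
  have hform : star x ⬝ᵥ Z⁻¹ *ᵥ x = star (star (Z⁻¹ *ᵥ x) ⬝ᵥ Z *ᵥ (Z⁻¹ *ᵥ x)) := by
    rw [star_dotProduct, hZy]
  rw [hform, Complex.star_def, Complex.conj_re]
  exact hZ _ hy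

lemma RePDc.isUnit {M : Matrix m m ℂ} (h : RePDc M) : IsUnit M := by
  rw [isUnit_iff_isUnit_det, isUnit_iff_ne_zero]
  intro hdet
  obtain ⟨x, hx, hMx⟩ := exists_mulVec_eq_zero_iff.mpr hdet
  simpa [hMx] using h x hx

end QuadraticForm

section BlockDiag

variable {ι P : Type*} [Fintype ι] [Fintype P] [DecidableEq ι]

lemma star_dotProduct_blockDiag_mulVec (f : ι → Matrix P P ℂ) (y : ι × P → ℂ) :
    star y ⬝ᵥ blockDiag f *ᵥ y
      = ∑ i, star (fun p => y (i, p)) ⬝ᵥ f i *ᵥ (fun p => y (i, p)) := by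
  simp only [dotProduct, mulVec, _root_.blockDiag, Fintype.sum_prod_type, Pi.star_apply]
  refine Finset.sum_congr rfl fun i _ => Finset.sum_congr rfl fun p _ => ?_
  rw [Finset.sum_comm]
  simp

lemma RePSDc.blockDiag {f : ι → Matrix P P ℂ} (hf : ∀ i, RePSDc (f i)) :
    RePSDc (blockDiag f) := fun y => by
  rw [star_dotProduct_blockDiag_mulVec, Complex.re_sum]
  exact Finset.sum_nonneg fun i _ => hf i _

lemma re_star_dotProduct_blockDiag_mulVec_pos {f : ι → Matrix P P ℂ}
    (hf : ∀ i, RePSDc (f i)) {i : ι} (hi : RePDc (f i)) {y : ι × P → ℂ}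
    (hy : (fun p => y (i, p)) ≠ 0) : 0 < (star y ⬝ᵥ blockDiag f *ᵥ y).re := by
  rw [star_dotProduct_blockDiag_mulVec, Complex.re_sum]
  exact Finset.sum_pos' (fun j _ => hf j _) ⟨i, Finset.mem_univ i, hi _ hy⟩

end BlockDiag

section Incidence

variable {E N P : Type*} [DecidableEq P]

lemma conjTranspose_map_ofReal_kronecker_one (A : Matrix E N ℝ) :
    (A.map Complex.ofReal ⊗ₖ (1 : Matrix P P ℂ))ᴴ
      = (A.map Complex.ofReal ⊗ₖ (1 : Matrix P P ℂ))ᵀ := by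
  ext ⟨v, q⟩ ⟨e, p⟩
  simp [one_apply, apply_ite (starRingEnd ℂ), eq_comm]

variable [Fintype N] [Fintype P]

lemma kronecker_one_mulVec_apply (A : Matrix E N ℂ) (x : N × P → ℂ) (e : E) (p : P) :
    ((A ⊗ₖ (1 : Matrix P P ℂ)) *ᵥ x) (e, p) = ∑ v, A e v * x (v, p) := by
  simp only [mulVec, dotProduct, Fintype.sum_prod_type, kroneckerMap_apply, one_apply]
  refine Finset.sum_congr rfl fun v _ => ?_
  simp [mul_ite]

variable [DecidableEq N]

lemma incidence_sum_mul_eq_sub {head tail : E → N} {A : Matrix E N ℝ} {e : E}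
    (hht : head e ≠ tail e)
    (hA : ∀ v, A e v = if v = head e then 1 else if v = tail e then -1 else 0) (f : N → ℂ) :
    ∑ v, (A e v : ℂ) * f v = f (head e) - f (tail e) := by
  simp only [hA, apply_ite Complex.ofReal, ite_mul]
  simp [Finset.sum_ite, Finset.filter_eq', Finset.filter_ne', hht.symm, sub_eq_add_neg]

end Incidence

lemma Relation.ReflTransGen.apply_eq_of_forall_rel {α β : Type*} {r : α → α → Prop} {f : α → β}
    (hf : ∀ a b, r a b → f a = f b) {a b : α} (h : ReflTransGen r a b) : f a = f b := by
  induction h with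
  | refl => rfl
  | tail _ hbc ih => exact ih.trans (hf _ _ hbc)

lemma exists_apply_head_ne_apply_tail {E N β : Type*} {head tail : E → N} {f : N → β} {v w : N}
    (h : Relation.ReflTransGen
      (fun a b => ∃ e, (head e = a ∧ tail e = b) ∨ (head e = b ∧ tail e = a)) v w)
    (hne : f v ≠ f w) : ∃ e, f (head e) ≠ f (tail e) := by
  by_contra! hflat
  refine hne (h.apply_eq_of_forall_rel ?_)
  rintro a b ⟨e, ⟨rfl, rfl⟩ | ⟨rfl, rfl⟩⟩
  exacts [hflat e, (hflat e).symm]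

theorem compound_admittance_invertible_general
    {E N P : Type*} [Fintype E] [Fintype N] [Fintype P]
    [DecidableEq E] [DecidableEq N] [DecidableEq P]
    (head tail : E → N) (hht : ∀ e, head e ≠ tail e)
    (A : Matrix E N ℝ)
    (hA : ∀ e v, A e v = if v = head e then 1 else if v = tail e then -1 else 0)
    (hconn : ∀ v w : N, Relation.ReflTransGen
      (fun a b => ∃ e, (head e = a ∧ tail e = b) ∨ (head e = b ∧ tail e = a)) v w)
    (Yl : E → Matrix P P ℂ) (Zl : E → Matrix P P ℂ)
    (hZpd : ∀ ℓ, RePDc (Zl ℓ))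
    (hZinv : ∀ ℓ, IsUnit (Zl ℓ))
    (hYZ : ∀ ℓ, Yl ℓ = (Zl ℓ)⁻¹)
    (Yt : N → Matrix P P ℂ)
    (hYt : ∀ t, RePSDc (Yt t))
    (t₀ : N) (ht₀pd : RePDc (Yt t₀)) :
    IsUnit (((A.map (Complex.ofReal)) ⊗ₖ (1 : Matrix P P ℂ))ᵀ * blockDiag Yl *
      ((A.map (Complex.ofReal)) ⊗ₖ (1 : Matrix P P ℂ)) + blockDiag Yt) := by
  set B := (A.map Complex.ofReal) ⊗ₖ (1 : Matrix P P ℂ)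
  have hBt : Bᵀ = Bᴴ := (conjTranspose_map_ofReal_kronecker_one A).symm
  have hBx (x : N × P → ℂ) (e : E) (p : P) : (B *ᵥ x) (e, p) = x (head e, p) - x (tail e, p) :=
    (kronecker_one_mulVec_apply _ x e p).trans
      (incidence_sum_mul_eq_sub (hht e) (hA e) fun v => x (v, p))
  have hYl (ℓ : E) : RePDc (Yl ℓ) := hYZ ℓ ▸ (hZpd ℓ).inv (hZinv ℓ)
  rw [hBt]
  have hYL : RePSDc (Bᴴ * blockDiag Yl * B) :=
    (RePSDc.blockDiag fun ℓ => (hYl ℓ).rePSDc).conjTranspose_mul_mul B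
  refine RePDc.isUnit <| rePDc_add hYL (RePSDc.blockDiag hYt) fun x hx => ?_
  by_cases hx₀ : (fun p => x (t₀, p)) = 0
  · obtain ⟨⟨v, p⟩, hv⟩ := Function.ne_iff.mp hx
    obtain ⟨e, he⟩ := exists_apply_head_ne_apply_tail (f := fun v p => x (v, p)) (hconn v t₀)
      (by rw [hx₀]; exact Function.ne_iff.mpr ⟨p, hv⟩)
    left
    rw [star_dotProduct_conjTranspose_mul_mul_mulVec]
    refine re_star_dotProduct_blockDiag_mulVec_pos (fun ℓ => (hYl ℓ).rePSDc) (hYl e) fun h => ?_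
    exact he (funext fun p => sub_eq_zero.mp ((hBx x e p).symm.trans (congrFun h p)))
  · exact .inr (re_star_dotProduct_blockDiag_mulVec_pos hYt ht₀pd hx₀)

theorem compound_admittance_invertible
    {E N P : Type*} [Fintype E] [Fintype N] [Fintype P]
    [DecidableEq E] [DecidableEq N] [DecidableEq P]
    (head tail : E → N) (hht : ∀ e, head e ≠ tail e)
    (A : Matrix E N ℝ)
    (hA : ∀ e v, A e v = if v = head e then 1 else if v = tail e then -1 else 0)
    (hconn : ∀ v w : N, Relation.ReflTransGen
      (fun a b => ∃ e, (head e = a ∧ tail e = b) ∨ (head e = b ∧ tail e = a)) v w)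
    (Yl : E → Matrix P P ℂ) (Zl : E → Matrix P P ℂ)
    (hZsym : ∀ ℓ, (Zl ℓ)ᵀ = Zl ℓ)
    (hZpd : ∀ ℓ, RePDc (Zl ℓ))
    (hZinv : ∀ ℓ, IsUnit (Zl ℓ))
    (hYZ : ∀ ℓ, Yl ℓ = (Zl ℓ)⁻¹)
    (Yt : N → Matrix P P ℂ)
    (hYt : ∀ t, RePSDc (Yt t))
    (t₀ : N) (ht₀inv : IsUnit (Yt t₀)) (ht₀pd : RePDc (Yt t₀)) :
    IsUnit (((A.map (Complex.ofReal)) ⊗ₖ (1 : Matrix P P ℂ))ᵀ * blockDiag Yl *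
      ((A.map (Complex.ofReal)) ⊗ₖ (1 : Matrix P P ℂ)) + blockDiag Yt) :=
  compound_admittance_invertible_general head tail hht A hA hconn Yl Zl hZpd hZinv hYZ Yt hYt t₀
    ht₀pd
end

section
/- If Z is a symmetric invertible complex matrix with Re(Z) positive definite, then Y = Z⁻¹ is symmetric and Re(Y) is positive definite. -/
open Matrix

/-! With `y = Z⁻¹ x` we have `x* Z⁻¹ x = (Z y)* y = conj (y* Z y)`, so the real part of the
quadratic form of `Z⁻¹` at `x` is that of `Z` at `y ≠ 0`. Symmetry of `Z⁻¹` holds because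
transposition commutes with inversion. -/

theorem Matrix.re_dotProduct_nonsing_inv_mulVec_pos {n 𝕜 : Type*} [Fintype n] [DecidableEq n]
    [RCLike 𝕜] {A : Matrix n n 𝕜} (hA : IsUnit A)
    (hpos : ∀ x : n → 𝕜, x ≠ 0 → 0 < RCLike.re (star x ⬝ᵥ A *ᵥ x)) :
    ∀ x : n → 𝕜, x ≠ 0 → 0 < RCLike.re (star x ⬝ᵥ A⁻¹ *ᵥ x) := by
  intro x hx
  set y := A⁻¹ *ᵥ x
  have hAy : A *ᵥ y = x := by
    rw [mulVec_mulVec, mul_nonsing_inv A ((isUnit_iff_isUnit_det A).mp hA), one_mulVec]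
  have hy : y ≠ 0 := fun h ↦ hx (by rw [← hAy, h, mulVec_zero])
  rw [← hAy, star_dotProduct, RCLike.star_def, RCLike.conj_re]
  exact hpos y hy

theorem inverse_of_symmetric_re_pos_def {n : Type*} [Fintype n] [DecidableEq n]
    (Z : Matrix n n ℂ) (hsym : Zᵀ = Z) (hinv : IsUnit Z)
    (hPD : ∀ x : n → ℂ, x ≠ 0 → 0 < (star x ⬝ᵥ Z.mulVec x).re) :
    (Z⁻¹)ᵀ = Z⁻¹ ∧ ∀ x : n → ℂ, x ≠ 0 → 0 < (star x ⬝ᵥ (Z⁻¹).mulVec x).re :=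
  ⟨by rw [transpose_nonsing_inv, hsym], re_dotProduct_nonsing_inv_mulVec_pos hinv hPD⟩
end

section
/- Let Y be a complex matrix with Hermitian part H(Y) := (Y + Y*)/2 positive semidefinite, partitioned by a nonempty proper index set Z with Y_{Z×Z} invertible and H(Y_{Z×Z}) positive definite. Then the Hermitian part of the Schur complement Y / Y_{Z×Z} is positive semidefinite. -/
open Matrix
open scoped Classical ComplexOrder

noncomputable section

/-- Submatrix of `Y` with rows in `A` and columns in `B`. -/
def subm {n : Type*} (Y : Matrix n n ℂ) (A B : Set n) : Matrix A B ℂ :=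
  Y.submatrix (Subtype.val) (Subtype.val)

/-- Schur complement of `Y` w.r.t. the block `Y_{Z×Z}`. -/
def schurC {n : Type*} [Fintype n] [DecidableEq n] (Y : Matrix n n ℂ) (Z : Set n) :
    Matrix ↥Zᶜ ↥Zᶜ ℂ :=
  subm Y Zᶜ Zᶜ - subm Y Zᶜ Z * (subm Y Z Z)⁻¹ * subm Y Z Zᶜ

/-- Hermitian part of a complex matrix. -/
def hermPart {m : Type*} (M : Matrix m m ℂ) : Matrix m m ℂ :=
  (1 / 2 : ℂ) • (M + Mᴴ)

lemma hermPart_isHermitian {m : Type*} (M : Matrix m m ℂ) : (hermPart M).IsHermitian := by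
  unfold hermPart
  unfold Matrix.IsHermitian
  rw [conjTranspose_smul, conjTranspose_add, conjTranspose_conjTranspose]
  have : star (1 / 2 : ℂ) = (1 / 2 : ℂ) := by
    simp [Complex.ext_iff]
  rw [this, add_comm]

lemma hermPart_form {m : Type*} [Fintype m] (M : Matrix m m ℂ) (v : m → ℂ) :
    star v ⬝ᵥ hermPart M *ᵥ v
      = (1 / 2 : ℂ) * (star v ⬝ᵥ M *ᵥ v + star (star v ⬝ᵥ M *ᵥ v)) := by
  unfold hermPart
  rw [smul_mulVec, dotProduct_smul, add_mulVec, dotProduct_add, smul_eq_mul]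
  congr 2
  rw [star_dotProduct, star_mulVec, conjTranspose_conjTranspose, dotProduct_mulVec]

theorem schur_complement_herm_part_psd {n : Type*} [Fintype n] [DecidableEq n]
    (Y : Matrix n n ℂ) (Z : Set n) (hZne : Z.Nonempty) (hZpr : Z ≠ Set.univ)
    (hYpsd : (hermPart Y).PosSemidef)
    (hYZZ : IsUnit (subm Y Z Z))
    (hYZZpd : (hermPart (subm Y Z Z)).PosDef) :
    (hermPart (schurC Y Z)).PosSemidef := by
  classical
  set A := subm Y Z Z with hA
  set B := subm Y Z Zᶜ with hB
  set C := subm Y Zᶜ Z with hC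
  set D := subm Y Zᶜ Zᶜ with hD
  have hAinv : A * A⁻¹ = 1 :=
    Matrix.mul_nonsing_inv A ((Matrix.isUnit_iff_isUnit_det A).mp hYZZ)
  refine posSemidef_iff_dotProduct_mulVec.mpr ⟨hermPart_isHermitian _, fun x => ?_⟩
  -- the equivalence between the sum of blocks and the whole index type
  let e : (↥Z ⊕ ↥Zᶜ) ≃ n := Equiv.Set.sumCompl Z
  have hblock : Y.submatrix e e = fromBlocks A B C D := by
    ext i j
    cases i with
    | inl i => cases j with
      | inl j => rfl
      | inr j => rfl
    | inr i => cases j with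
      | inl j => rfl
      | inr j => rfl
  -- the lifted vector
  set u : ↥Z → ℂ := -((A⁻¹ * B) *ᵥ x) with hu
  set v : (↥Z ⊕ ↥Zᶜ) → ℂ := Sum.elim u x with hv
  set w : n → ℂ := v ∘ e.symm with hw
  have key : star x ⬝ᵥ (schurC Y Z) *ᵥ x = star w ⬝ᵥ Y *ᵥ w := by
    have h1 : Y *ᵥ w = ((Y.submatrix e e) *ᵥ v) ∘ e.symm := by
      rw [Matrix.submatrix_mulVec_equiv]
      funext i
      simp [hw]
    have h2 : star w = (star v) ∘ e.symm := rfl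
    rw [h1, h2]
    simp only [comp_equiv_dotProduct_comp_equiv]
    rw [hblock, hv, Function.star_sumElim, fromBlocks_mulVec, sumElim_dotProduct_sumElim]
    have hAu : A *ᵥ u + B *ᵥ x = 0 := by
      rw [hu, Matrix.mulVec_neg, Matrix.mulVec_mulVec, ← Matrix.mul_assoc, hAinv,
        Matrix.one_mul]
      simp
    have hCu : C *ᵥ u + D *ᵥ x = (schurC Y Z) *ᵥ x := by
      rw [hu, Matrix.mulVec_neg, Matrix.mulVec_mulVec, ← Matrix.mul_assoc,
        schurC, ← hA, ← hB, ← hC, ← hD, Matrix.sub_mulVec]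
      abel
    simp only [Sum.elim_comp_inl, Sum.elim_comp_inr]
    rw [hAu, hCu, dotProduct_zero, zero_add]
  rw [hermPart_form, key, ← hermPart_form]
  exact hYpsd.dotProduct_mulVec_nonneg w

end
end

section
/- Kron reduction is transitive: if Z₁ and Z₂ are disjoint nonempty index subsets with Z₁ ∪ Z₂ a proper subset, Y_{Z₁×Z₁} is invertible, and the block of the Schur complement Y₁ := Y / Y_{Z₁×Z₁} indexed by Z₂ is invertible, then (Y / Y_{Z₁×Z₁}) / (Y₁)_{Z₂×Z₂} = Y / Y_{(Z₁∪Z₂)×(Z₁∪Z₂)} (quotient formula for Schur complements). -/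
open Matrix
open scoped Classical

noncomputable section

/-- Abstract quotient formula for a 3×3 block matrix. -/
lemma quotient_formula_blocks {α β γ : Type*} [Fintype α] [Fintype β] [Fintype γ]
    [DecidableEq α] [DecidableEq β]
    (a : Matrix α α ℂ) (b : Matrix α β ℂ) (c : Matrix α γ ℂ)
    (d : Matrix β α ℂ) (e : Matrix β β ℂ) (f : Matrix β γ ℂ)
    (g : Matrix γ α ℂ) (h : Matrix γ β ℂ) (k : Matrix γ γ ℂ)
    (ha : IsUnit a) (hE : IsUnit (e - d * a⁻¹ * b)) :
    k - fromCols g h * (fromBlocks a b d e)⁻¹ * fromRows c f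
      = (k - g * a⁻¹ * c)
        - (h - g * a⁻¹ * b) * (e - d * a⁻¹ * b)⁻¹ * (f - d * a⁻¹ * c) := by
  letI := ha.invertible
  have h1 : e - d * ⅟a * b = e - d * a⁻¹ * b := by rw [invOf_eq_nonsing_inv]
  letI : Invertible (e - d * ⅟a * b) := h1 ▸ hE.invertible
  letI := fromBlocks₁₁Invertible a b d e
  rw [← invOf_eq_nonsing_inv (fromBlocks a b d e), invOf_fromBlocks₁₁_eq,
    fromCols_mul_fromBlocks, fromCols_mul_fromRows]
  simp only [invOf_eq_nonsing_inv, h1, Matrix.add_mul, Matrix.mul_add, Matrix.sub_mul,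
    Matrix.mul_sub, Matrix.neg_mul, Matrix.mul_neg, Matrix.mul_assoc]
  abel

/-- Transport `schurC` along equivalences of the index sets. -/
lemma schurC_transport {n : Type*} [Fintype n] [DecidableEq n] (Y : Matrix n n ℂ) (S : Set n)
    {σ γ : Type*} [Fintype σ] [DecidableEq σ] [Fintype γ]
    (eS : ↥S ≃ σ) (eγ : ↥Sᶜ ≃ γ)
    (W : Matrix σ σ ℂ) (G : Matrix γ σ ℂ) (C : Matrix σ γ ℂ) (K : Matrix γ γ ℂ)
    (hW : subm Y S S = W.submatrix eS eS)
    (hG : subm Y Sᶜ S = G.submatrix eγ eS)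
    (hC : subm Y S Sᶜ = C.submatrix eS eγ)
    (hK : subm Y Sᶜ Sᶜ = K.submatrix eγ eγ) :
    schurC Y S = (K - G * W⁻¹ * C).submatrix eγ eγ := by
  rw [schurC, hW, hG, hC, hK, Matrix.inv_submatrix_equiv,
    Matrix.submatrix_mul_equiv, Matrix.submatrix_mul_equiv]
  rfl

/-- Crabtree–Haynsworth quotient formula: Kron reduction is transitive. -/
theorem kron_reduction_transitive {n : Type*} [Fintype n] [DecidableEq n]
    (Y : Matrix n n ℂ) (Z₁ Z₂ : Set n)
    (h₁ne : Z₁.Nonempty) (h₂ne : Z₂.Nonempty) (hdisj : Disjoint Z₁ Z₂)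
    (hpr : Z₁ ∪ Z₂ ≠ Set.univ)
    (hY₁ : IsUnit (subm Y Z₁ Z₁))
    (hY₂ : IsUnit (subm (schurC Y Z₁) {x : ↥Z₁ᶜ | (x : n) ∈ Z₂}
                    {x : ↥Z₁ᶜ | (x : n) ∈ Z₂})) :
    ∀ (i j : n) (hi₁ : i ∉ Z₁) (hi₂ : i ∉ Z₂) (hj₁ : j ∉ Z₁) (hj₂ : j ∉ Z₂),
      schurC (schurC Y Z₁) {x : ↥Z₁ᶜ | (x : n) ∈ Z₂}
          ⟨⟨i, hi₁⟩, hi₂⟩ ⟨⟨j, hj₁⟩, hj₂⟩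
        = schurC Y (Z₁ ∪ Z₂) ⟨i, fun h => h.elim hi₁ hi₂⟩ ⟨j, fun h => h.elim hj₁ hj₂⟩ := by
  intro i j hi₁ hi₂ hj₁ hj₂
  set Z₂' : Set ↥Z₁ᶜ := {x : ↥Z₁ᶜ | (x : n) ∈ Z₂} with hZ₂'
  -- block matrices
  set a : Matrix ↥Z₁ ↥Z₁ ℂ := subm Y Z₁ Z₁ with ha_def
  set b : Matrix ↥Z₁ ↥Z₂ ℂ := Matrix.of fun p q => Y p q with hb_def
  set c : Matrix ↥Z₁ ↥Z₂'ᶜ ℂ := Matrix.of fun p q => Y p q.1 with hc_def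
  set d : Matrix ↥Z₂ ↥Z₁ ℂ := Matrix.of fun p q => Y p q with hd_def
  set e : Matrix ↥Z₂ ↥Z₂ ℂ := Matrix.of fun p q => Y p q with he_def
  set f : Matrix ↥Z₂ ↥Z₂'ᶜ ℂ := Matrix.of fun p q => Y p q.1 with hf_def
  set g : Matrix ↥Z₂'ᶜ ↥Z₁ ℂ := Matrix.of fun p q => Y p.1 q with hg_def
  set h : Matrix ↥Z₂'ᶜ ↥Z₂ ℂ := Matrix.of fun p q => Y p.1 q with hh_def
  set k : Matrix ↥Z₂'ᶜ ↥Z₂'ᶜ ℂ := Matrix.of fun p q => Y p.1 q.1 with hk_def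
  -- equivalences
  have hZ₂Z₁ : ∀ {x : n}, x ∈ Z₂ → x ∉ Z₁ := fun hx h => (Set.disjoint_left.mp hdisj h) hx
  let e₂ : ↥Z₂' ≃ ↥Z₂ :=
  { toFun := fun x => ⟨x.1.1, x.2⟩
    invFun := fun y => ⟨⟨y.1, hZ₂Z₁ y.2⟩, y.2⟩
    left_inv := fun x => Subtype.ext (Subtype.ext rfl)
    right_inv := fun y => Subtype.ext rfl }
  let eS : ↥(Z₁ ∪ Z₂) ≃ ↥Z₁ ⊕ ↥Z₂ :=
  { toFun := fun x =>
      if hx : (x : n) ∈ Z₁ then Sum.inl ⟨x, hx⟩ else Sum.inr ⟨x, x.2.resolve_left hx⟩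
    invFun := Sum.elim (fun p => ⟨p.1, Or.inl p.2⟩) (fun q => ⟨q.1, Or.inr q.2⟩)
    left_inv := fun x => by
      by_cases hx : (x : n) ∈ Z₁
      · simp only [dif_pos hx, Sum.elim_inl]
      · simp only [dif_neg hx, Sum.elim_inr]
    right_inv := fun s => by
      rcases s with p | q
      · simp only [Sum.elim_inl]; exact dif_pos p.2
      · simp only [Sum.elim_inr]; exact dif_neg (hZ₂Z₁ q.2) }
  let eγ : ↥(Z₁ ∪ Z₂)ᶜ ≃ ↥Z₂'ᶜ :=
  { toFun := fun x => ⟨⟨x.1, fun hx => x.2 (Or.inl hx)⟩, fun hx => x.2 (Or.inr hx)⟩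
    invFun := fun y => ⟨y.1.1, fun hx => hx.elim y.1.2 y.2⟩
    left_inv := fun x => Subtype.ext rfl
    right_inv := fun y => Subtype.ext (Subtype.ext rfl) }
  -- underlying value of a sum element
  have hW : ∀ u v, fromBlocks a b d e u v
      = Y (Sum.elim (Subtype.val : ↥Z₁ → n) Subtype.val u)
          (Sum.elim (Subtype.val : ↥Z₁ → n) Subtype.val v) := by
    rintro (u | u) (v | v) <;> rfl
  have hval : ∀ x : ↥(Z₁ ∪ Z₂),
      Sum.elim (Subtype.val : ↥Z₁ → n) Subtype.val (eS x) = (x : n) := by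
    intro x
    by_cases hx : (x : n) ∈ Z₁
    · simp only [eS, Equiv.coe_fn_mk, dif_pos hx, Sum.elim_inl]
    · simp only [eS, Equiv.coe_fn_mk, dif_neg hx, Sum.elim_inr]
  -- RHS transport
  have hA : subm Y (Z₁ ∪ Z₂) (Z₁ ∪ Z₂) = (fromBlocks a b d e).submatrix eS eS := by
    ext p q
    rw [Matrix.submatrix_apply, hW, hval, hval]; rfl
  have hG : subm Y (Z₁ ∪ Z₂)ᶜ (Z₁ ∪ Z₂) = (fromCols g h).submatrix eγ eS := by
    ext p q
    rw [Matrix.submatrix_apply]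
    have : ∀ v, fromCols g h (eγ p) v
        = Y (p : n) (Sum.elim (Subtype.val : ↥Z₁ → n) Subtype.val v) := by
      rintro (v | v) <;> rfl
    rw [this, hval]; rfl
  have hC : subm Y (Z₁ ∪ Z₂) (Z₁ ∪ Z₂)ᶜ = (fromRows c f).submatrix eS eγ := by
    ext p q
    rw [Matrix.submatrix_apply]
    have : ∀ u, fromRows c f u (eγ q)
        = Y (Sum.elim (Subtype.val : ↥Z₁ → n) Subtype.val u) (q : n) := by
      rintro (u | u) <;> rfl
    rw [this, hval]; rfl
  have hK : subm Y (Z₁ ∪ Z₂)ᶜ (Z₁ ∪ Z₂)ᶜ = k.submatrix eγ eγ := rfl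
  -- LHS transport
  set Y₁ : Matrix ↥Z₁ᶜ ↥Z₁ᶜ ℂ := schurC Y Z₁ with hY₁def
  have hE' : subm Y₁ Z₂' Z₂' = (e - d * a⁻¹ * b).submatrix e₂ e₂ := rfl
  have hH' : subm Y₁ Z₂'ᶜ Z₂' = (h - g * a⁻¹ * b).submatrix _root_.id e₂ := rfl
  have hF' : subm Y₁ Z₂' Z₂'ᶜ = (f - d * a⁻¹ * c).submatrix e₂ _root_.id := rfl
  have hK' : subm Y₁ Z₂'ᶜ Z₂'ᶜ = k - g * a⁻¹ * c := rfl
  have hE : IsUnit (e - d * a⁻¹ * b) := by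
    rw [hE'] at hY₂
    exact (Matrix.isUnit_submatrix_equiv e₂ e₂).mp hY₂
  -- main computation
  have hLHS : schurC Y₁ Z₂'
      = (k - g * a⁻¹ * c)
        - (h - g * a⁻¹ * b) * (e - d * a⁻¹ * b)⁻¹ * (f - d * a⁻¹ * c) := by
    rw [schurC, hE', hH', hF', hK', Matrix.inv_submatrix_equiv,
      Matrix.submatrix_mul_equiv, Matrix.submatrix_mul_equiv, Matrix.submatrix_id_id]
  have hRHS : schurC Y (Z₁ ∪ Z₂)
      = ((k - g * a⁻¹ * c)
        - (h - g * a⁻¹ * b) * (e - d * a⁻¹ * b)⁻¹ * (f - d * a⁻¹ * c)).submatrix eγ eγ := by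
    rw [schurC_transport Y (Z₁ ∪ Z₂) eS eγ (fromBlocks a b d e) (fromCols g h)
        (fromRows c f) k hA hG hC hK,
      quotient_formula_blocks a b c d e f g h k hY₁ hE]
  rw [hLHS, hRHS, Matrix.submatrix_apply]
  rfl

end
end
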